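/- Let q be a real number with q > 1 and m ≥ 1 an integer. For 1 ≤ k ≤ m define a2_k = (1-q) · q^{-2k^2-k} / (q^{-2};q^{-2})_{k-1} · ( (q^{-2k};q^{-2})_{m-k} / (q^{-2};q^{-2})_{m-k} ) · q^{-m+k} and b2_k = q^{-2k^2+k} / (q^{-2};q^{-2})_{k-1} · ( (q^{-2k};q^{-2})_{m-k} / (q^{-2};q^{-2})_{m-k} ) · q^{-m+k}. Then Σ_{k=1}^{m} (a2_k + b2_k) = (q^{-m}/(1+q)) · Σ_{i=1}^{m} (-1)^{i-1} q^{-i(i+1)} (q^{2i+1} + 1) / (1/q^2; 1/q^2)_{m-i}. -/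

import Mathlib

/-!
Put `x = q⁻²`, `(x)ₖ = (x;x)ₖ` and `m = n + 1`. After the shift `k = j + 1` both sides are
combinations of the convolutions `Cₙ(c) = ∑_{j ≤ n} cⱼ / (x)ₙ₋ⱼ`: the left side is
`q⁻ᵐ (x)ₙ (Cₙ(xʲ dⱼ) + (1 - q) x Cₙ(x²ʲ dⱼ))` with `dⱼ = x^{j²} / (x)ⱼ²`, the right side is
`q⁻ᵐ (q Cₙ(f) - Cₙ(f(· + 1))) / (1 + q)` with `fⱼ = (-1)ʲ q^{-j(j+1)}`.
As `1/(x)ₖ₊₁ - 1/(x)ₖ = x^{k+1}/(x)ₖ₊₁`, each `Cₙ(c)` satisfies a first-order recurrence in `n`.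
On the left these recurrences are closed by the finite Durfee rectangle identity
`∑ⱼ x^{j²+jc} / ((x)ⱼ (x)ⱼ₊c (x)ₐ₋ⱼ) = 1 / ((x)ₐ (x)ₐ₊c)`, proved by a double induction on `a`
and `c`. Induction on `n` then gives `(x)ₙ Cₙ(xʲ dⱼ) = Cₙ(f)` and
`(1 - x) (x)ₙ Cₙ(x²ʲ dⱼ) = Cₙ(f) + Cₙ(f(· + 1))`, and the theorem is a linear consequence of
these two identities and `x q² = 1`.
-/

/-- The q-Pochhammer symbol `(a; Q)_n = ∏_{j=0}^{n-1} (1 - a Q^j)` over the reals. -/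
noncomputable def qPoch (a Q : ℝ) (n : ℕ) : ℝ := ∏ j ∈ Finset.range n, (1 - a * Q ^ j)

open Finset

lemma qPoch_succ (a Q : ℝ) (n : ℕ) : qPoch a Q (n + 1) = qPoch a Q n * (1 - a * Q ^ n) :=
  prod_range_succ _ _

lemma qPoch_add (a Q : ℝ) (j d : ℕ) :
    qPoch a Q (j + d) = qPoch a Q j * qPoch (a * Q ^ j) Q d := by
  simp only [qPoch, prod_range_add, pow_add, mul_assoc]

lemma qPoch_self_succ (x : ℝ) (n : ℕ) :
    qPoch x x (n + 1) = qPoch x x n * (1 - x ^ (n + 1)) := by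
  rw [qPoch_succ, pow_succ']

section

variable {x : ℝ}

lemma qPoch_self_pos (hx : |x| < 1) (n : ℕ) : 0 < qPoch x x n := by
  induction n with
  | zero => simp [qPoch]
  | succ n ih =>
    have : x ^ (n + 1) < 1 :=
      (le_abs_self _).trans_lt (by rw [abs_pow]; exact pow_lt_one₀ (abs_nonneg x) hx (by omega))
    rw [qPoch_self_succ]
    exact mul_pos ih (by linarith)

lemma one_sub_pow_succ_ne_zero (hx : |x| < 1) (k : ℕ) : 1 - x ^ (k + 1) ≠ 0 := by
  have hP := qPoch_self_pos hx (k + 1)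
  rw [qPoch_self_succ] at hP
  exact (pos_of_mul_pos_right hP (qPoch_self_pos hx k).le).ne'

lemma div_qPoch_self_eq_div_succ_sub (hx : |x| < 1) (c : ℝ) (k : ℕ) :
    c / qPoch x x k = c / qPoch x x (k + 1) - c * x ^ (k + 1) / qPoch x x (k + 1) := by
  have := (qPoch_self_pos hx k).ne'
  have := one_sub_pow_succ_ne_zero hx k
  rw [qPoch_self_succ]
  field_simp

noncomputable def qPochConv (x : ℝ) (f : ℕ → ℝ) (n : ℕ) : ℝ :=
  ∑ j ∈ range (n + 1), f j / qPoch x x (n - j)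

lemma qPochConv_add (f g : ℕ → ℝ) (n : ℕ) :
    qPochConv x (fun j => f j + g j) n = qPochConv x f n + qPochConv x g n := by
  simp only [qPochConv, add_div, sum_add_distrib]

lemma qPochConv_const_mul (c : ℝ) (f : ℕ → ℝ) (n : ℕ) :
    qPochConv x (fun j => c * f j) n = c * qPochConv x f n := by
  simp only [qPochConv, mul_sum, mul_div_assoc]

lemma qPochConv_succ_eq_add_shift (f : ℕ → ℝ) (n : ℕ) :
    qPochConv x f (n + 1) = f 0 / qPoch x x (n + 1) + qPochConv x (fun j => f (j + 1)) n := by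
  rw [qPochConv, sum_range_succ', add_comm, qPochConv]
  simp only [Nat.sub_zero, Nat.add_sub_add_right]

lemma qPochConv_succ (hx : |x| < 1) (f : ℕ → ℝ) (n : ℕ) :
    qPochConv x f (n + 1) = qPochConv x f n +
      ∑ j ∈ range (n + 2), f j * x ^ (n + 1 - j) / qPoch x x (n + 1 - j) := by
  have hterm : ∀ j ∈ range (n + 1), f j / qPoch x x (n + 1 - j) =
      f j / qPoch x x (n - j) + f j * x ^ (n + 1 - j) / qPoch x x (n + 1 - j) := by
    intro j hj
    rw [show n + 1 - j = n - j + 1 by have := mem_range.1 hj; omega,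
      div_qPoch_self_eq_div_succ_sub hx (f j) (n - j)]
    ring
  rw [qPochConv, sum_range_succ, sum_congr rfl hterm, sum_add_distrib, sum_range_succ _ (n + 1),
    qPochConv]
  simp only [Nat.sub_self, pow_zero, mul_one]
  ring

lemma qPochConv_succ_of_eq_pow_mul (hx : |x| < 1) {f g : ℕ → ℝ} (hfg : ∀ j, f j = x ^ j * g j)
    (n : ℕ) : qPochConv x f (n + 1) = qPochConv x f n + x ^ (n + 1) * qPochConv x g (n + 1) := by
  rw [qPochConv_succ hx, add_right_inj, qPochConv, mul_sum]
  refine sum_congr rfl fun j hj => ?_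
  have : x ^ (n + 1) = x ^ j * x ^ (n + 1 - j) := by
    rw [← pow_add, Nat.add_sub_cancel' (mem_range_succ_iff.1 hj)]
  rw [hfg, this]
  ring

lemma qPochConv_succ_of_succ_eq_neg_pow_mul (hx : |x| < 1) {f : ℕ → ℝ}
    (hf : ∀ j, f (j + 1) = -(x ^ (j + 1) * f j)) (n : ℕ) :
    qPochConv x f (n + 1) =
      (1 - x ^ (n + 1)) * qPochConv x f n + f 0 * x ^ (n + 1) / qPoch x x (n + 1) := by
  have hterm : ∀ j ∈ range (n + 1), f (j + 1) * x ^ (n + 1 - (j + 1)) / qPoch x x (n + 1 - (j + 1))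
      = -(x ^ (n + 1) * (f j / qPoch x x (n - j))) := by
    intro j hj
    rw [hf, Nat.add_sub_add_right, show n + 1 = j + 1 + (n - j) by have := mem_range.1 hj; omega,
      pow_add]
    ring
  rw [qPochConv_succ hx, sum_range_succ', sum_congr rfl hterm, sum_neg_distrib, ← mul_sum]
  simp only [qPochConv, Nat.sub_zero]
  ring

noncomputable def durfeeCoeff (x : ℝ) (c j : ℕ) : ℝ :=
  x ^ (j * j + j * c) / (qPoch x x j * qPoch x x (j + c))

lemma durfeeCoeff_succ (hx : |x| < 1) (c j : ℕ) :
    durfeeCoeff x (c + 1) j =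
      x ^ j * (durfeeCoeff x c j + x ^ (c + 1) * durfeeCoeff x (c + 1) j) := by
  have := one_sub_pow_succ_ne_zero hx (j + c)
  have := (qPoch_self_pos hx j).ne'
  have := (qPoch_self_pos hx (j + c)).ne'
  simp only [durfeeCoeff, ← add_assoc, qPoch_self_succ]
  field_simp
  ring

lemma qPochConv_durfeeCoeff_succ_succ (hx : |x| < 1) (a c : ℕ) :
    (1 - x ^ (a + c + 2)) * qPochConv x (durfeeCoeff x (c + 1)) (a + 1) =
      qPochConv x (durfeeCoeff x (c + 1)) a
        + x ^ (a + 1) * qPochConv x (durfeeCoeff x c) (a + 1) := by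
  have h := qPochConv_succ_of_eq_pow_mul hx (durfeeCoeff_succ hx c) a
  rw [qPochConv_add, qPochConv_const_mul] at h
  linear_combination h

lemma qPochConv_durfeeCoeff_zero_succ (hx : |x| < 1) (a : ℕ) :
    (1 - x ^ (a + 1)) * qPochConv x (durfeeCoeff x 0) (a + 1) =
      qPochConv x (durfeeCoeff x 0) a + x ^ (a + 1) * qPochConv x (durfeeCoeff x 1) a := by
  set g : ℕ → ℝ := fun j => x ^ (j * j - j) / (qPoch x x j * qPoch x x j)
  have hg : ∀ j, durfeeCoeff x 0 j = x ^ j * g j := fun j => by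
    rw [durfeeCoeff, ← mul_div_assoc, ← pow_add, Nat.add_sub_cancel' (Nat.le_mul_self j)]
    simp
  have hg_succ : (fun j => g (j + 1)) = fun j => durfeeCoeff x 0 (j + 1) + durfeeCoeff x 1 j := by
    funext j
    have := (qPoch_self_pos hx j).ne'
    have := one_sub_pow_succ_ne_zero hx j
    simp only [g, durfeeCoeff, add_zero, qPoch_self_succ,
      Nat.sub_eq_of_eq_add (show (j + 1) * (j + 1) = j * j + j * 1 + (j + 1) by ring)]
    field_simp
    ring
  have h := qPochConv_succ_of_eq_pow_mul hx hg a
  rw [qPochConv_succ_eq_add_shift g, hg_succ, qPochConv_add, ← add_assoc,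
    show g 0 = durfeeCoeff x 0 0 by simp [g, durfeeCoeff], ← qPochConv_succ_eq_add_shift] at h
  linear_combination h

theorem qPochConv_durfeeCoeff (hx : |x| < 1) (a c : ℕ) :
    qPochConv x (durfeeCoeff x c) a = 1 / (qPoch x x a * qPoch x x (a + c)) := by
  have hP := fun k => (qPoch_self_pos hx k).ne'
  have hne := one_sub_pow_succ_ne_zero hx
  induction a generalizing c with
  | zero => simp [qPochConv, durfeeCoeff, qPoch]
  | succ a iha =>
    induction c with
    | zero =>
      have h := qPochConv_durfeeCoeff_zero_succ hx a
      rw [iha, iha] at h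
      apply mul_left_cancel₀ (hne a)
      rw [h]
      have := hP a; have := hne a
      simp only [add_zero, qPoch_self_succ]
      field_simp
      ring
    | succ c ihc =>
      have h := qPochConv_durfeeCoeff_succ_succ hx a c
      rw [iha, ihc] at h
      apply mul_left_cancel₀ (hne (a + c + 1))
      rw [show a + c + 2 = a + c + 1 + 1 by ring] at h
      rw [h, show a + 1 + (c + 1) = a + c + 1 + 1 by ring, show a + (c + 1) = a + c + 1 by ring,
        show a + 1 + c = a + c + 1 by ring, qPoch_self_succ x (a + c + 1), qPoch_self_succ x a]
      have := hP a; have := hP (a + c + 1); have := hne a; have := hne (a + c + 1)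
      field_simp
      ring

theorem qPoch_mul_qPochConv_pow_mul_durfeeCoeff (hx : |x| < 1) {f : ℕ → ℝ} (hf0 : f 0 = 1)
    (hf : ∀ j, f (j + 1) = -(x ^ (j + 1) * f j)) (n : ℕ) :
    qPoch x x n * qPochConv x (fun j => x ^ j * durfeeCoeff x 0 j) n = qPochConv x f n := by
  induction n with
  | zero => simp [qPochConv, durfeeCoeff, qPoch, hf0]
  | succ n ih =>
    rw [qPochConv_succ_of_eq_pow_mul hx (fun j => rfl), qPochConv_durfeeCoeff hx,
      qPochConv_succ_of_succ_eq_neg_pow_mul hx hf, ← ih, hf0, add_zero, qPoch_self_succ]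
    have := (qPoch_self_pos hx n).ne'
    have := one_sub_pow_succ_ne_zero hx n
    field_simp

lemma one_sub_mul_qPochConv_pow_two_mul_durfeeCoeff (hx : |x| < 1) (n : ℕ) :
    (1 - x) * qPochConv x (fun j => x ^ (2 * j) * durfeeCoeff x 0 j) n =
      (2 - x ^ (n + 1)) * qPochConv x (fun j => x ^ j * durfeeCoeff x 0 j) n
        - 1 / qPoch x x n ^ 2 := by
  induction n with
  | zero => simp [qPochConv, durfeeCoeff, qPoch]; ring
  | succ n ih =>
    have h1 := qPochConv_succ_of_eq_pow_mul hx (g := durfeeCoeff x 0) (fun j => rfl) n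
    rw [qPochConv_durfeeCoeff hx, add_zero] at h1
    have h2 := qPochConv_succ_of_eq_pow_mul hx
      (f := fun j => x ^ (2 * j) * durfeeCoeff x 0 j) (g := fun j => x ^ j * durfeeCoeff x 0 j)
      (fun j => by ring) n
    rw [h2, mul_add, ih, h1, qPoch_self_succ]
    have := (qPoch_self_pos hx n).ne'
    have := one_sub_pow_succ_ne_zero hx n
    field_simp
    ring

theorem one_sub_mul_qPoch_mul_qPochConv_pow_two_mul_durfeeCoeff (hx : |x| < 1) {f : ℕ → ℝ}
    (hf0 : f 0 = 1) (hf : ∀ j, f (j + 1) = -(x ^ (j + 1) * f j)) (n : ℕ) :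
    (1 - x) * (qPoch x x n * qPochConv x (fun j => x ^ (2 * j) * durfeeCoeff x 0 j) n) =
      qPochConv x f n + qPochConv x (fun j => f (j + 1)) n := by
  have hP := (qPoch_self_pos hx n).ne'
  have hshift : qPochConv x (fun j => f (j + 1)) n =
      (1 - x ^ (n + 1)) * qPochConv x f n - 1 / qPoch x x n := by
    have h := qPochConv_succ_eq_add_shift (x := x) f n
    rw [qPochConv_succ_of_succ_eq_neg_pow_mul hx hf, hf0, qPoch_self_succ] at h
    have hne := one_sub_pow_succ_ne_zero hx n
    have e : 1 * x ^ (n + 1) / (qPoch x x n * (1 - x ^ (n + 1)))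
        - 1 / (qPoch x x n * (1 - x ^ (n + 1))) = -1 / qPoch x x n := by
      field_simp
      ring
    linear_combination e - h
  rw [hshift, ← qPoch_mul_qPochConv_pow_mul_durfeeCoeff hx hf0 hf, mul_left_comm,
    one_sub_mul_qPochConv_pow_two_mul_durfeeCoeff hx]
  field_simp
  ring

end

lemma sum_Icc_one_eq_sum_range {M : Type*} [AddCommMonoid M] (f : ℕ → M) (n : ℕ) :
    ∑ k ∈ Icc 1 n, f k = ∑ j ∈ range n, f (j + 1) := by
  rw [range_eq_Ico, sum_Ico_add', zero_add, Ico_add_one_right_eq_Icc]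

section

variable {q x : ℝ}

lemma pow_eq_zpow_of_zpow_neg_two_eq (hx : q ^ (-2 : ℤ) = x) (e : ℕ) :
    x ^ e = q ^ (-2 * (e : ℤ)) := by
  rw [← hx, ← zpow_natCast, ← zpow_mul]

lemma abs_zpow_neg_two_lt_one (hq : 1 < q) : |q ^ (-2 : ℤ)| < 1 := by
  rw [abs_of_pos (zpow_pos (by positivity) _)]
  exact zpow_lt_one_of_neg₀ hq (by norm_num)

lemma a2_add_b2_summand_eq (hq : 1 < q) (hx : q ^ (-2 : ℤ) = x) {j n : ℕ} (hj : j ≤ n) :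
    (1 - q) * q ^ (-(2 * ((j + 1 : ℕ) : ℤ) ^ 2) - ((j + 1 : ℕ) : ℤ)) / qPoch x x (j + 1 - 1)
        * (qPoch (q ^ (-(2 * ((j + 1 : ℕ) : ℤ)))) x (n + 1 - (j + 1))
          / qPoch x x (n + 1 - (j + 1)))
        * q ^ (-((n + 1 : ℕ) : ℤ) + ((j + 1 : ℕ) : ℤ))
      + q ^ (-(2 * ((j + 1 : ℕ) : ℤ) ^ 2) + ((j + 1 : ℕ) : ℤ)) / qPoch x x (j + 1 - 1)
        * (qPoch (q ^ (-(2 * ((j + 1 : ℕ) : ℤ)))) x (n + 1 - (j + 1))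
          / qPoch x x (n + 1 - (j + 1)))
        * q ^ (-((n + 1 : ℕ) : ℤ) + ((j + 1 : ℕ) : ℤ))
    = q ^ (-((n + 1 : ℕ) : ℤ)) * qPoch x x n
        * (x ^ j * durfeeCoeff x 0 j / qPoch x x (n - j)
          + (1 - q) * x * (x ^ (2 * j) * durfeeCoeff x 0 j / qPoch x x (n - j))) := by
  have hq0 : q ≠ 0 := by positivity
  have hx1 : |x| < 1 := hx ▸ abs_zpow_neg_two_lt_one hq
  have hP := fun k => (qPoch_self_pos hx1 k).ne'
  have hpow := pow_eq_zpow_of_zpow_neg_two_eq hx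
  have hfirst : q ^ (-(2 * ((j + 1 : ℕ) : ℤ))) = x * x ^ j := by
    rw [← pow_succ', hpow]
    push_cast
    ring_nf
  have hsplit : qPoch (x * x ^ j) x (n - j) = qPoch x x n / qPoch x x j := by
    rw [eq_div_iff (hP j), mul_comm, ← qPoch_add, Nat.add_sub_cancel' hj]
  have ha : q ^ (-(2 * ((j + 1 : ℕ) : ℤ) ^ 2) - ((j + 1 : ℕ) : ℤ))
      * q ^ (-((n + 1 : ℕ) : ℤ) + ((j + 1 : ℕ) : ℤ))
      = q ^ (-((n + 1 : ℕ) : ℤ)) * (x * x ^ (2 * j) * x ^ (j * j)) := by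
    rw [← pow_succ', ← pow_add, hpow, ← zpow_add₀ hq0, ← zpow_add₀ hq0]
    congr 1
    push_cast
    ring
  have hb : q ^ (-(2 * ((j + 1 : ℕ) : ℤ) ^ 2) + ((j + 1 : ℕ) : ℤ))
      * q ^ (-((n + 1 : ℕ) : ℤ) + ((j + 1 : ℕ) : ℤ))
      = q ^ (-((n + 1 : ℕ) : ℤ)) * (x ^ j * x ^ (j * j)) := by
    rw [← pow_add, hpow, ← zpow_add₀ hq0, ← zpow_add₀ hq0]
    congr 1
    push_cast
    ring
  rw [Nat.add_sub_cancel, Nat.add_sub_add_right, hfirst, hsplit]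
  simp only [durfeeCoeff, mul_zero, add_zero]
  have := hP j; have := hP (n - j)
  field_simp
  linear_combination (1 - q) * qPoch x x n * ha + qPoch x x n * hb

lemma succ_eq_neg_pow_mul_of_eq (hq : q ≠ 0) (hx : q ^ (-2 : ℤ) = x) {f : ℕ → ℝ}
    (hf : ∀ j, f j = (-1) ^ j * q ^ (-((j : ℤ) * (j + 1)))) (j : ℕ) :
    f (j + 1) = -(x ^ (j + 1) * f j) := by
  have h : q ^ (-2 * ((j + 1 : ℕ) : ℤ)) * q ^ (-((j : ℤ) * (j + 1)))
      = q ^ (-(((j + 1 : ℕ) : ℤ) * ((j + 1 : ℕ) + 1))) := by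
    rw [← zpow_add₀ hq]
    congr 1
    push_cast
    ring
  rw [hf, hf, pow_eq_zpow_of_zpow_neg_two_eq hx, pow_succ]
  linear_combination (-1 : ℝ) ^ j * h

lemma alternating_summand_eq (hq : q ≠ 0) {f : ℕ → ℝ}
    (hf : ∀ j, f j = (-1) ^ j * q ^ (-((j : ℤ) * (j + 1)))) (j n : ℕ) :
    (-1 : ℝ) ^ (j + 1 - 1) * q ^ (-((j + 1 : ℕ) : ℤ) * (((j + 1 : ℕ) : ℤ) + 1))
        * (q ^ (2 * (j + 1) + 1) + 1) / qPoch x x (n + 1 - (j + 1))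
      = q * (f j / qPoch x x (n - j)) - f (j + 1) / qPoch x x (n - j) := by
  have h1 : q ^ (-((j + 1 : ℕ) : ℤ) * (((j + 1 : ℕ) : ℤ) + 1)) * q ^ (2 * (j + 1) + 1)
      = q * q ^ (-((j : ℤ) * (j + 1))) := by
    rw [← zpow_natCast q (2 * (j + 1) + 1), ← zpow_add₀ hq, ← zpow_one_add₀ hq]
    congr 1
    push_cast
    ring
  have h2 : q ^ (-((j + 1 : ℕ) : ℤ) * (((j + 1 : ℕ) : ℤ) + 1))
      = q ^ (-(((j + 1 : ℕ) : ℤ) * (((j + 1 : ℕ) : ℤ) + 1))) := by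
    rw [neg_mul]
  rw [hf, hf, Nat.add_sub_cancel, Nat.add_sub_add_right, pow_succ (-1 : ℝ) j]
  linear_combination (-1 : ℝ) ^ j / qPoch x x (n - j) * (h1 + h2)

theorem a2_add_b2_conv_identity (hq : 1 < q) (hx : q ^ (-2 : ℤ) = x) {f : ℕ → ℝ}
    (hf : ∀ j, f j = (-1) ^ j * q ^ (-((j : ℤ) * (j + 1)))) (n : ℕ) :
    (1 + q) * (qPoch x x n * (qPochConv x (fun j => x ^ j * durfeeCoeff x 0 j) n
      + (1 - q) * x * qPochConv x (fun j => x ^ (2 * j) * durfeeCoeff x 0 j) n))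
    = q * qPochConv x f n - qPochConv x (fun j => f (j + 1)) n := by
  have hx1 : |x| < 1 := hx ▸ abs_zpow_neg_two_lt_one hq
  have hf0 : f 0 = 1 := by simp [hf]
  have hf_succ := succ_eq_neg_pow_mul_of_eq (by positivity) hx hf
  have hxq : x * q ^ 2 = 1 := by
    rw [← hx, ← zpow_natCast, ← zpow_add₀ (by positivity)]
    norm_num
  linear_combination (1 + q) * qPoch_mul_qPochConv_pow_mul_durfeeCoeff hx1 hf0 hf_succ n
    - one_sub_mul_qPoch_mul_qPochConv_pow_two_mul_durfeeCoeff hx1 hf0 hf_succ n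
    - qPoch x x n * qPochConv x (fun j => x ^ (2 * j) * durfeeCoeff x 0 j) n * hxq

end

theorem anzanello_a2_plus_b2_sum_general (q : ℝ) (hq : 1 < q) (m : ℕ) :
    ∑ k ∈ Finset.Icc 1 m,
      ((1 - q) * q ^ (-(2 * (k : ℤ) ^ 2) - k) / qPoch (q ^ (-2 : ℤ)) (q ^ (-2 : ℤ)) (k - 1)
          * (qPoch (q ^ (-(2 * (k : ℤ)))) (q ^ (-2 : ℤ)) (m - k)
              / qPoch (q ^ (-2 : ℤ)) (q ^ (-2 : ℤ)) (m - k))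
          * q ^ (-(m : ℤ) + k)
        + q ^ (-(2 * (k : ℤ) ^ 2) + k) / qPoch (q ^ (-2 : ℤ)) (q ^ (-2 : ℤ)) (k - 1)
          * (qPoch (q ^ (-(2 * (k : ℤ)))) (q ^ (-2 : ℤ)) (m - k)
              / qPoch (q ^ (-2 : ℤ)) (q ^ (-2 : ℤ)) (m - k))
          * q ^ (-(m : ℤ) + k))
    = q ^ (-(m : ℤ)) / (1 + q) * ∑ i ∈ Finset.Icc 1 m,
        (-1 : ℝ) ^ (i - 1) * q ^ (-(i : ℤ) * (i + 1)) * (q ^ (2 * i + 1) + 1)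
          / qPoch (q ^ (-2 : ℤ)) (q ^ (-2 : ℤ)) (m - i) := by
  obtain ⟨x, hx⟩ : ∃ x, q ^ (-2 : ℤ) = x := ⟨_, rfl⟩
  obtain ⟨f, hf⟩ : ∃ f : ℕ → ℝ, ∀ j, f j = (-1) ^ j * q ^ (-((j : ℤ) * (j + 1))) :=
    ⟨_, fun _ => rfl⟩
  rcases m with _ | n
  · simp
  have h := a2_add_b2_conv_identity hq hx hf n
  simp only [qPochConv] at h
  rw [hx, sum_Icc_one_eq_sum_range, sum_Icc_one_eq_sum_range,
    sum_congr rfl fun j hj => a2_add_b2_summand_eq hq hx (Nat.lt_add_one_iff.1 (mem_range.1 hj)),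
    sum_congr rfl fun j _ => alternating_summand_eq (by positivity) hf j n, ← mul_sum,
    sum_add_distrib, ← mul_sum, sum_sub_distrib, ← mul_sum, div_mul_eq_mul_div,
    eq_div_iff (by positivity)]
  linear_combination q ^ (-((n + 1 : ℕ) : ℤ)) * h

theorem anzanello_a2_plus_b2_sum (q : ℝ) (hq : 1 < q) (m : ℕ) (hm : 1 ≤ m) :
    ∑ k ∈ Finset.Icc 1 m,
      ((1 - q) * q ^ (-(2 * (k : ℤ) ^ 2) - k) / qPoch (q ^ (-2 : ℤ)) (q ^ (-2 : ℤ)) (k - 1)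
          * (qPoch (q ^ (-(2 * (k : ℤ)))) (q ^ (-2 : ℤ)) (m - k)
              / qPoch (q ^ (-2 : ℤ)) (q ^ (-2 : ℤ)) (m - k))
          * q ^ (-(m : ℤ) + k)
        + q ^ (-(2 * (k : ℤ) ^ 2) + k) / qPoch (q ^ (-2 : ℤ)) (q ^ (-2 : ℤ)) (k - 1)
          * (qPoch (q ^ (-(2 * (k : ℤ)))) (q ^ (-2 : ℤ)) (m - k)
              / qPoch (q ^ (-2 : ℤ)) (q ^ (-2 : ℤ)) (m - k))
          * q ^ (-(m : ℤ) + k))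
    = q ^ (-(m : ℤ)) / (1 + q) * ∑ i ∈ Finset.Icc 1 m,
        (-1 : ℝ) ^ (i - 1) * q ^ (-(i : ℤ) * (i + 1)) * (q ^ (2 * i + 1) + 1)
          / qPoch (q ^ (-2 : ℤ)) (q ^ (-2 : ℤ)) (m - i) :=
  anzanello_a2_plus_b2_sum_general q hq m
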